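/- arXiv:2410.06052 — 5 statements merged into one kernel-verified Lean document; each statement's English description precedes it below -/
import Mathlib

section
/- For real numbers p, q and 0 < α < 1, one has −p·sign(p−q)|p−q|^α ≤ −|p|(|p|^α − 2|q|^α). -/
/-!
Write `p · sig(p - q)^α = ε |p| |p - q|^α` with `ε = ±1` according as `p` and `p - q` have the
same or opposite signs. In the first case subadditivity of `t ↦ t^α` gives
`|p|^α ≤ |p - q|^α + |q|^α`, which is more than enough. In the second case `q` lies beyond `p`
as seen from `0`, so both `|p|` and `|p - q|` are at most `|q|`, and
`|p|^α + |p - q|^α ≤ 2 |q|^α`.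
-/

open Real

lemma rpow_abs_le_rpow_abs_sub_add {α : ℝ} (hα : 0 ≤ α) (hα1 : α ≤ 1) (p q : ℝ) :
    |p| ^ α ≤ |p - q| ^ α + |q| ^ α :=
  calc |p| ^ α ≤ (|p - q| + |q|) ^ α := by
        gcongr
        simpa using abs_add_le (p - q) q
    _ ≤ |p - q| ^ α + |q| ^ α := rpow_add_le_add_rpow (abs_nonneg _) (abs_nonneg _) hα hα1

lemma mul_sign_sub_mul_rpow_of_nonneg {α p q : ℝ} (hα : α ≠ 0) (h : 0 ≤ p * (p - q)) :
    p * Real.sign (p - q) * |p - q| ^ α = |p| * |p - q| ^ α := by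
  rcases lt_trichotomy (p - q) 0 with hpq | hpq | hpq
  · rw [Real.sign_of_neg hpq, abs_of_nonpos (nonpos_of_mul_nonneg_left h hpq), mul_neg_one]
  · rw [hpq, abs_zero, zero_rpow hα, mul_zero, mul_zero]
  · rw [Real.sign_of_pos hpq, abs_of_nonneg (nonneg_of_mul_nonneg_left h hpq), mul_one]

lemma mul_sign_sub_of_mul_neg {p q : ℝ} (h : p * (p - q) < 0) :
    p * Real.sign (p - q) = -|p| := by
  rcases lt_or_gt_of_ne (right_ne_zero_of_mul h.ne) with hpq | hpq
  · rw [Real.sign_of_neg hpq, abs_of_pos (pos_of_mul_neg_left h hpq.le), mul_neg_one]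
  · rw [Real.sign_of_pos hpq, abs_of_neg (neg_of_mul_neg_left h hpq.le), mul_one, neg_neg]

lemma abs_lt_abs_and_abs_sub_lt_abs_of_mul_neg {p q : ℝ} (h : p * (p - q) < 0) :
    |p| < |q| ∧ |p - q| < |q| := by
  constructor <;> rw [← sq_lt_sq] <;> nlinarith [sq_nonneg p]

/-- For real `p, q` and `0 < α < 1`,
`−p·sign(p−q)·|p−q|^α ≤ −|p|·(|p|^α − 2|q|^α)`. -/
theorem neg_mul_sig_le (p q α : ℝ) (hα : 0 < α) (hα1 : α < 1) :
    -(p * Real.sign (p - q) * |p - q| ^ α) ≤ -(|p| * (|p| ^ α - 2 * |q| ^ α)) := by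
  rw [neg_le_neg_iff]
  have hq : 0 ≤ |q| ^ α := by positivity
  rcases le_or_gt 0 (p * (p - q)) with h | h
  · rw [mul_sign_sub_mul_rpow_of_nonneg hα.ne' h]
    have := rpow_abs_le_rpow_abs_sub_add hα.le hα1.le p q
    gcongr
    linarith
  · rw [mul_sign_sub_of_mul_neg h, neg_mul, ← mul_neg]
    obtain ⟨hp, hpq⟩ := abs_lt_abs_and_abs_sub_lt_abs_of_mul_neg h
    have hp' : |p| ^ α ≤ |q| ^ α := by gcongr
    have hpq' : |p - q| ^ α ≤ |q| ^ α := by gcongr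
    gcongr
    linarith
end

section
/- For vectors p, q ∈ ℝⁿ and 0 < α < 1, −pᵀ sig(p−q)^α ≤ −(α/(1+α)) ‖p‖_{1+α}^{1+α} + (α/(1+α)) 2^{(1+α)/α} ‖q‖_{1+α}^{1+α}, where sig(x)^α is applied componentwise as sign(xᵢ)|xᵢ|^α. -/
/-! The inequality holds coordinatewise: with `c = α/(1+α)` and `K = 2^((1+α)/α)`,
`c|a|^(1+α) - cK|b|^(1+α) ≤ a·sign(a-b)|a-b|^α` for all reals `a, b`.
If `a` lies between `0` and `b`, then `|a|, |a-b| ≤ |b|`, so the right side is at least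
`-|b|^(1+α)`, which `1 + c ≤ cK` absorbs. Otherwise the right side is `|a||a-b|^α ≥ 0`:
for `|a| ≤ 2|b|` the left side is nonpositive because `2^(1+α) ≤ K`, and for `|a| > 2|b|`
we have `|a-b| ≥ |a|/2`, so `c·2^α ≤ 1` concludes. -/

open Finset Real

lemma neg_abs_le_mul_sign (a x : ℝ) : -|a| ≤ a * Real.sign x := by
  rcases Real.sign_apply_eq x with h | h | h <;> rw [h] <;> cases abs_cases a <;> linarith

lemma mul_sign_eq_abs_of_pos_mul {a x : ℝ} (h : 0 < a * x) : a * Real.sign x = |a| := by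
  rcases lt_or_gt_of_ne (left_ne_zero_of_mul h.ne') with ha | ha
  · rw [Real.sign_of_neg (neg_of_mul_pos_right h ha.le), abs_of_neg ha, mul_neg_one]
  · rw [Real.sign_of_pos (pos_of_mul_pos_right h ha.le), abs_of_pos ha, mul_one]

section

variable {α c K a b : ℝ}

lemma le_mul_sign_sub_mul_rpow_of_mul_sub_nonpos (hα : 0 ≤ α) (hc : 0 ≤ c)
    (hcK : 1 + c ≤ c * K) (hab : a * (a - b) ≤ 0) :
    c * |a| ^ (1 + α) - c * K * |b| ^ (1 + α) ≤ a * Real.sign (a - b) * |a - b| ^ α := by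
  have ha : |a| ≤ |b| := sq_le_sq.mp (by nlinarith [sq_nonneg (a - b)])
  have hab' : |a - b| ≤ |b| := sq_le_sq.mp (by nlinarith [sq_nonneg a])
  have hb : 0 ≤ |b| ^ (1 + α) := by positivity
  calc c * |a| ^ (1 + α) - c * K * |b| ^ (1 + α)
      ≤ c * |b| ^ (1 + α) - c * K * |b| ^ (1 + α) := by gcongr
    _ ≤ -|b| ^ (1 + α) := by nlinarith
    _ = -|b| * |b| ^ α := by rw [rpow_one_add' (abs_nonneg b) (by linarith), neg_mul]
    _ ≤ -|a| * |a - b| ^ α := by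
      rw [neg_mul, neg_mul, neg_le_neg_iff]
      gcongr
    _ ≤ a * Real.sign (a - b) * |a - b| ^ α := by
      gcongr
      exact neg_abs_le_mul_sign a (a - b)

lemma le_mul_sign_sub_mul_rpow_of_mul_sub_pos (hα : 0 ≤ α) (hc : 0 ≤ c)
    (hK : (2 : ℝ) ^ (1 + α) ≤ K) (hc2 : c * 2 ^ α ≤ 1) (hab : 0 < a * (a - b)) :
    c * |a| ^ (1 + α) - c * K * |b| ^ (1 + α) ≤ a * Real.sign (a - b) * |a - b| ^ α := by
  rw [mul_sign_eq_abs_of_pos_mul hab]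
  rcases le_or_gt |a| (2 * |b|) with h | h
  · have : c * |a| ^ (1 + α) ≤ c * K * |b| ^ (1 + α) :=
      calc c * |a| ^ (1 + α) ≤ c * (2 * |b|) ^ (1 + α) := by gcongr
        _ = c * 2 ^ (1 + α) * |b| ^ (1 + α) := by
          rw [mul_rpow zero_le_two (abs_nonneg b), mul_assoc]
        _ ≤ c * K * |b| ^ (1 + α) := by gcongr
    have : 0 ≤ |a| * |a - b| ^ α := by positivity
    linarith
  · have hhalf : |a| / 2 ≤ |a - b| := by linarith [abs_sub_abs_le_abs_sub a b]
    have : 0 ≤ K := (rpow_pos_of_pos two_pos _).le.trans hK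
    have : 0 ≤ c * K * |b| ^ (1 + α) := by positivity
    calc c * |a| ^ (1 + α) - c * K * |b| ^ (1 + α) ≤ c * |a| ^ (1 + α) := by linarith
      _ = c * 2 ^ α * (|a| * (|a| / 2) ^ α) := by
        rw [div_rpow (abs_nonneg a) zero_le_two, rpow_one_add' (abs_nonneg a) (by linarith)]
        field_simp
      _ ≤ |a| * |a - b| ^ α := by
        rw [← one_mul (|a| * |a - b| ^ α)]
        gcongr

lemma le_mul_sign_sub_mul_rpow (hα : 0 ≤ α) (hc : 0 ≤ c) (hcK : 1 + c ≤ c * K)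
    (hK : (2 : ℝ) ^ (1 + α) ≤ K) (hc2 : c * 2 ^ α ≤ 1) (a b : ℝ) :
    c * |a| ^ (1 + α) - c * K * |b| ^ (1 + α) ≤ a * Real.sign (a - b) * |a - b| ^ α := by
  rcases le_or_gt (a * (a - b)) 0 with hab | hab
  · exact le_mul_sign_sub_mul_rpow_of_mul_sub_nonpos hα hc hcK hab
  · exact le_mul_sign_sub_mul_rpow_of_mul_sub_pos hα hc hK hc2 hab

end

section

variable {α : ℝ}

lemma one_add_le_div_one_add_mul_two_rpow (hα : 0 < α) (hα1 : α ≤ 1) :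
    1 + α / (1 + α) ≤ α / (1 + α) * (2 : ℝ) ^ ((1 + α) / α) := by
  have hbern : 1 + α⁻¹ ≤ (2 : ℝ) ^ α⁻¹ := by
    simpa [one_add_one_eq_two] using
      one_add_mul_self_le_rpow_one_add (s := 1) (by norm_num) ((one_le_inv₀ hα).mpr hα1)
  have h2 : (2 : ℝ) ^ ((1 + α) / α) = 2 * 2 ^ α⁻¹ := by
    rw [add_div, div_self hα.ne', rpow_add two_pos, rpow_one, one_div, mul_comm]
  rw [h2, div_mul_eq_mul_div, le_div_iff₀ (by linarith), add_mul, div_mul_cancel₀ _ (by linarith)]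
  have : α * (1 + α⁻¹) = α + 1 := by field_simp
  nlinarith

lemma two_rpow_one_add_le (hα : 0 < α) (hα1 : α ≤ 1) :
    (2 : ℝ) ^ (1 + α) ≤ 2 ^ ((1 + α) / α) :=
  rpow_le_rpow_of_exponent_le one_le_two (le_div_self (by linarith) hα hα1)

lemma div_one_add_mul_two_rpow_le_one (hα : 0 < α) (hα1 : α ≤ 1) :
    α / (1 + α) * (2 : ℝ) ^ α ≤ 1 := by
  have h2 : (2 : ℝ) ^ α ≤ 2 := by
    simpa using rpow_le_rpow_of_exponent_le one_le_two hα1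
  rw [div_mul_eq_mul_div, div_le_one (by linarith)]
  nlinarith

end

/-- For vectors `p, q ∈ ℝⁿ` and `0 < α < 1`,
`−pᵀ sig(p−q)^α ≤ −(α/(1+α)) ‖p‖_{1+α}^{1+α} + (α/(1+α)) 2^{(1+α)/α} n^{(1-α)/(2(α+1))} ‖q‖_{1+α}^{1+α}`
in the form with component sums:
`-∑ i, p i * sign (p i - q i) * |p i - q i|^α ≤
  -(α/(1+α)) ∑ i, |p i|^{1+α} + (α/(1+α)) 2^{(1+α)/α} ∑ i, |q i|^{1+α}`. -/
theorem neg_inner_sig_le {n : ℕ} (p q : Fin n → ℝ) (α : ℝ) (hα : 0 < α) (hα1 : α < 1) :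
    -(∑ i, p i * Real.sign (p i - q i) * |p i - q i| ^ α) ≤
      -(α / (1 + α)) * ∑ i, |p i| ^ (1 + α) +
        (α / (1 + α)) * (2 : ℝ) ^ ((1 + α) / α) * ∑ i, |q i| ^ (1 + α) := by
  have hsum := sum_le_sum fun i (_ : i ∈ univ) =>
    le_mul_sign_sub_mul_rpow hα.le (by positivity)
      (one_add_le_div_one_add_mul_two_rpow hα hα1.le) (two_rpow_one_add_le hα hα1.le)
      (div_one_add_mul_two_rpow_le_one hα hα1.le) (p i) (q i)
  rw [sum_sub_distrib, ← mul_sum, ← mul_sum] at hsum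
  linarith
end

section
/- Let p₀ ∈ ℝ² be an unknown parameter, and consider measurement vectors u_k ∈ ℝ², recorded vectors r₁,…,r_ς ∈ ℝ², S = Σ_{m=1}^{ς} r_m r_mᵀ with rank(S) = 2. Let estimates p̂_k evolve by p̂_{k+1} = p̂_k − η( U_k + S )( p̂_k − p₀ ), where U_k = u_k u_kᵀ and η = λ_min(S)/(λ_max(U_k) + λ_max(S))². Then the error e_k = p̂_k − p₀ satisfies ‖e_{k+1}‖² ≤ (1 − λ_min(S)²/(λ_max(U_k)+λ_max(S))²) ‖e_k‖². -/
noncomputable def lamMin (A : Matrix (Fin 2) (Fin 2) ℝ) : ℝ := sInf (spectrum ℝ A)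
noncomputable def lamMax (A : Matrix (Fin 2) (Fin 2) ℝ) : ℝ := sSup (spectrum ℝ A)

/-!
With `e = p̂_k - p₀` and `T = U_k + S`, the update reads `e_{k+1} = e - η T e`, so
`‖e_{k+1}‖² = ‖e‖² - 2η⟪e, T e⟫ + η²‖T e‖²`. Expanding in an orthonormal eigenbasis gives the
Rayleigh bounds `⟪e, S e⟫ ≥ λ_min(S)‖e‖²`, `⟪e, U_k e⟫ ≥ 0` and
`‖T e‖ ≤ ‖U_k e‖ + ‖S e‖ ≤ (λ_max(U_k) + λ_max(S))‖e‖`; with `η = λ_min(S)/c²`,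
`c = λ_max(U_k) + λ_max(S)`, the right-hand side is at most `(1 - 2λ_min²/c² + λ_min²/c²)‖e‖²`.
-/

open scoped RealInnerProductSpace

section Spectral

variable {E : Type*} [NormedAddCommGroup E] [InnerProductSpace ℝ E] [FiniteDimensional ℝ E]
  {T : E →ₗ[ℝ] E}

namespace LinearMap.IsSymmetric

variable (hT : T.IsSymmetric) {n : ℕ} (hn : Module.finrank ℝ E = n)

theorem sInf_spectrum_le_eigenvalues (i : Fin n) : sInf (spectrum ℝ T) ≤ hT.eigenvalues hn i :=
  csInf_le (Module.End.finite_spectrum T).bddBelow (hT.hasEigenvalue_eigenvalues hn i).mem_spectrum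

theorem eigenvalues_le_sSup_spectrum (i : Fin n) : hT.eigenvalues hn i ≤ sSup (spectrum ℝ T) :=
  le_csSup (Module.End.finite_spectrum T).bddAbove (hT.hasEigenvalue_eigenvalues hn i).mem_spectrum

theorem norm_sq_eq_sum_repr_sq (x : E) : ‖x‖ ^ 2 = ∑ i, (hT.eigenvectorBasis hn).repr x i ^ 2 := by
  rw [← (hT.eigenvectorBasis hn).repr.norm_map x, EuclideanSpace.norm_sq_eq]
  simp only [Real.norm_eq_abs, sq_abs]

theorem real_inner_self_apply_eq_sum (x : E) :
    ⟪x, T x⟫ = ∑ i, hT.eigenvalues hn i * (hT.eigenvectorBasis hn).repr x i ^ 2 := by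
  rw [← (hT.eigenvectorBasis hn).sum_inner_mul_inner]
  refine Finset.sum_congr rfl fun i _ => ?_
  rw [← OrthonormalBasis.repr_apply_apply, hT.eigenvectorBasis_apply_self_apply,
    real_inner_comm, ← OrthonormalBasis.repr_apply_apply, RCLike.ofReal_real_eq_id, id_eq]
  ring

theorem norm_apply_sq_eq_sum (x : E) :
    ‖T x‖ ^ 2 = ∑ i, hT.eigenvalues hn i ^ 2 * (hT.eigenvectorBasis hn).repr x i ^ 2 := by
  simp only [hT.norm_sq_eq_sum_repr_sq hn, hT.eigenvectorBasis_apply_self_apply, mul_pow,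
    RCLike.ofReal_real_eq_id, id_eq]

end LinearMap.IsSymmetric

theorem LinearMap.IsSymmetric.sInf_spectrum_mul_norm_sq_le (hT : T.IsSymmetric) (x : E) :
    sInf (spectrum ℝ T) * ‖x‖ ^ 2 ≤ ⟪x, T x⟫ := by
  rw [hT.norm_sq_eq_sum_repr_sq rfl, hT.real_inner_self_apply_eq_sum rfl, Finset.mul_sum]
  gcongr with i
  exact hT.sInf_spectrum_le_eigenvalues rfl i

theorem LinearMap.IsPositive.nonneg_of_mem_spectrum (hT : T.IsPositive) {μ : ℝ}
    (hμ : μ ∈ spectrum ℝ T) : 0 ≤ μ := by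
  obtain ⟨v, hv⟩ := (Module.End.hasEigenvalue_iff_mem_spectrum.mpr hμ).exists_hasEigenvector
  have hinner : 0 ≤ μ * ‖v‖ ^ 2 := by
    simpa [hv.apply_eq_smul, real_inner_smul_right, real_inner_self_eq_norm_sq]
      using hT.inner_nonneg_right v
  exact nonneg_of_mul_nonneg_left hinner (pow_pos (norm_pos_iff.mpr hv.2) 2)

theorem LinearMap.IsPositive.norm_apply_le_sSup_spectrum_mul (hT : T.IsPositive) (x : E) :
    ‖T x‖ ≤ sSup (spectrum ℝ T) * ‖x‖ := by
  have hsq : ‖T x‖ ^ 2 ≤ (sSup (spectrum ℝ T) * ‖x‖) ^ 2 := by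
    rw [hT.isSymmetric.norm_apply_sq_eq_sum rfl, mul_pow,
      hT.isSymmetric.norm_sq_eq_sum_repr_sq rfl, Finset.mul_sum]
    gcongr with i
    · exact hT.nonneg_eigenvalues rfl i
    · exact hT.isSymmetric.eigenvalues_le_sSup_spectrum rfl i
  have hM : 0 ≤ sSup (spectrum ℝ T) := Real.sSup_nonneg fun _ => hT.nonneg_of_mem_spectrum
  exact le_of_sq_le_sq hsq (by positivity)

end Spectral

theorem norm_sub_div_sq_smul_sq_le {E : Type*} [NormedAddCommGroup E] [InnerProductSpace ℝ E]
    {e v : E} {a c : ℝ} (ha : 0 ≤ a) (hinner : a * ‖e‖ ^ 2 ≤ ⟪e, v⟫) (hnorm : ‖v‖ ≤ c * ‖e‖) :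
    ‖e - (a / c ^ 2) • v‖ ^ 2 ≤ (1 - a ^ 2 / c ^ 2) * ‖e‖ ^ 2 := by
  have hnorm_sq : ‖v‖ ^ 2 ≤ c ^ 2 * ‖e‖ ^ 2 := by
    rw [← mul_pow]; exact pow_le_pow_left₀ (norm_nonneg v) hnorm 2
  have hstep : (a / c ^ 2) ^ 2 * c ^ 2 = a ^ 2 / c ^ 2 := by
    -- for `c = 0` both sides vanish, by the convention `x / 0 = 0`
    rcases eq_or_ne c 0 with rfl | hc
    · simp
    · field_simp
  calc ‖e - (a / c ^ 2) • v‖ ^ 2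
      = ‖e‖ ^ 2 - 2 * (a / c ^ 2) * ⟪e, v⟫ + (a / c ^ 2) ^ 2 * ‖v‖ ^ 2 := by
        rw [norm_sub_sq_real, real_inner_smul_right, norm_smul, mul_pow, Real.norm_eq_abs, sq_abs]
        ring
    _ ≤ ‖e‖ ^ 2 - 2 * (a / c ^ 2) * (a * ‖e‖ ^ 2) + (a / c ^ 2) ^ 2 * (c ^ 2 * ‖e‖ ^ 2) := by
        gcongr
    _ = (1 - a ^ 2 / c ^ 2) * ‖e‖ ^ 2 := by
        linear_combination ‖e‖ ^ 2 * hstep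

namespace Matrix

variable {A : Matrix (Fin 2) (Fin 2) ℝ}

theorem IsHermitian.lamMin_mul_norm_sq_le (hA : A.IsHermitian) (x : EuclideanSpace ℝ (Fin 2)) :
    lamMin A * ‖x‖ ^ 2 ≤ ⟪x, toEuclideanLin A x⟫ := by
  rw [lamMin, ← spectrum_toLpLin 2]
  exact (isSymmetric_toEuclideanLin_iff.mpr hA).sInf_spectrum_mul_norm_sq_le x

theorem PosSemidef.norm_toEuclideanLin_le (hA : A.PosSemidef) (x : EuclideanSpace ℝ (Fin 2)) :
    ‖toEuclideanLin A x‖ ≤ lamMax A * ‖x‖ := by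
  rw [lamMax, ← spectrum_toLpLin 2]
  exact (isPositive_toEuclideanLin_iff.mpr hA).norm_apply_le_sSup_spectrum_mul x

theorem PosSemidef.lamMin_nonneg (hA : A.PosSemidef) : 0 ≤ lamMin A := by
  rw [lamMin, ← spectrum_toLpLin 2]
  exact Real.sInf_nonneg fun _ => (isPositive_toEuclideanLin_iff.mpr hA).nonneg_of_mem_spectrum

end Matrix

theorem concurrent_learning_one_step_general
    (p₀ : EuclideanSpace ℝ (Fin 2)) (phat : ℕ → EuclideanSpace ℝ (Fin 2))
    (u : ℕ → EuclideanSpace ℝ (Fin 2)) (ς : ℕ) (r : Fin ς → EuclideanSpace ℝ (Fin 2))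
    (S : Matrix (Fin 2) (Fin 2) ℝ)
    (hS : S = ∑ m, Matrix.vecMulVec (r m) (r m))
    (U : ℕ → Matrix (Fin 2) (Fin 2) ℝ)
    (hU : ∀ k, U k = Matrix.vecMulVec (u k) (u k))
    (η : ℕ → ℝ)
    (hη : ∀ k, η k = lamMin S / (lamMax (U k) + lamMax S) ^ 2)
    (hupd : ∀ k, phat (k + 1) =
      phat k - η k • (Matrix.toEuclideanLin (U k + S)) (phat k - p₀)) :
    ∀ k, ‖phat (k + 1) - p₀‖ ^ 2 ≤
      (1 - (lamMin S) ^ 2 / (lamMax (U k) + lamMax S) ^ 2) * ‖phat k - p₀‖ ^ 2 := by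
  intro k
  have hvecMulVec (v : EuclideanSpace ℝ (Fin 2)) : (Matrix.vecMulVec v v).PosSemidef := by
    simpa using Matrix.posSemidef_vecMulVec_self_star (v : Fin 2 → ℝ)
  have hUk : (U k).PosSemidef := hU k ▸ hvecMulVec (u k)
  have hSpos : S.PosSemidef := hS ▸ Matrix.posSemidef_sum _ fun m _ => hvecMulVec (r m)
  set e := phat k - p₀
  have hsplit : Matrix.toEuclideanLin (U k + S) e =
      Matrix.toEuclideanLin (U k) e + Matrix.toEuclideanLin S e := by
    simp only [map_add, LinearMap.add_apply]
  rw [hupd k, sub_right_comm, hη k]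
  apply norm_sub_div_sq_smul_sq_le hSpos.lamMin_nonneg
  · rw [hsplit, inner_add_right]
    linarith [(Matrix.isPositive_toEuclideanLin_iff.mpr hUk).inner_nonneg_right e,
      hSpos.1.lamMin_mul_norm_sq_le e]
  · rw [hsplit, add_mul]
    exact (norm_add_le _ _).trans
      (add_le_add (hUk.norm_toEuclideanLin_le e) (hSpos.norm_toEuclideanLin_le e))

/-- One-step contraction of the concurrent-learning estimator: with
`p̂_{k+1} = p̂_k − η_k (U_k + S)(p̂_k − p₀)`, `U_k = u_k u_kᵀ`,
`S = ∑ r_m r_mᵀ` of rank 2, and `η_k = λ_min(S)/(λ_max(U_k)+λ_max(S))²`, the error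
satisfies `‖e_{k+1}‖² ≤ (1 − λ_min(S)²/(λ_max(U_k)+λ_max(S))²)‖e_k‖²`. -/
theorem concurrent_learning_one_step
    (p₀ : EuclideanSpace ℝ (Fin 2)) (phat : ℕ → EuclideanSpace ℝ (Fin 2))
    (u : ℕ → EuclideanSpace ℝ (Fin 2)) (ς : ℕ) (r : Fin ς → EuclideanSpace ℝ (Fin 2))
    (S : Matrix (Fin 2) (Fin 2) ℝ)
    (hS : S = ∑ m, Matrix.vecMulVec (r m) (r m))
    (hrank : S.rank = 2)
    (U : ℕ → Matrix (Fin 2) (Fin 2) ℝ)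
    (hU : ∀ k, U k = Matrix.vecMulVec (u k) (u k))
    (η : ℕ → ℝ)
    (hη : ∀ k, η k = lamMin S / (lamMax (U k) + lamMax S) ^ 2)
    (hupd : ∀ k, phat (k + 1) =
      phat k - η k • (Matrix.toEuclideanLin (U k + S)) (phat k - p₀)) :
    ∀ k, ‖phat (k + 1) - p₀‖ ^ 2 ≤
      (1 - (lamMin S) ^ 2 / (lamMax (U k) + lamMax S) ^ 2) * ‖phat k - p₀‖ ^ 2 :=
  concurrent_learning_one_step_general p₀ phat u ς r S hS U hU η hη hupd
end

section
/- Under the setup of the concurrent-learning estimator, if ‖u_k‖ ≤ v_max Δt·2 for all k, i.e., λ_max(U_k) ≤ 2 v_max Δt, and S is positive definite, then ‖e_k‖ ≤ λ^k ‖e₀‖ with λ = √(1 − λ_min(S)²/(2 v_max Δt + λ_max(S))²) < 1, so the estimation error converges exponentially to zero. -/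
/-!
With `M = U + S`, the error evolves by `e ↦ (I - η M) e`. Since `U ⪰ 0`, evaluating the quadratic
forms on the unit eigenvectors of `M` puts its spectrum in `[λ_min(S), L]` with
`L = λ_max(U) + λ_max(S)`. In an eigenbasis of `M` the step multiplies the `i`-th coordinate by
`1 - η μᵢ`, and for `η = λ_min(S) / L²` this factor lies in `[0, 1 - λ_min(S)² / L²]`, so its square
is at most `1 - λ_min(S)² / L²`. Enlarging `L` to `2 v_max Δt + λ_max(S)` makes the contraction
factor uniform in `k`.
-/

open Matrix RealInnerProductSpace Set

lemma sq_one_sub_div_sq_mul_le {m μ L : ℝ} (hm : 0 < m) (hmμ : m ≤ μ) (hμL : μ ≤ L) :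
    (1 - m / L ^ 2 * μ) ^ 2 ≤ 1 - m ^ 2 / L ^ 2 := by
  have hL : 0 < L := hm.trans_le (hmμ.trans hμL)
  have h_lower : m ^ 2 / L ^ 2 ≤ m / L ^ 2 * μ := by
    rw [sq m, mul_div_right_comm]
    exact mul_le_mul_of_nonneg_left hmμ (by positivity)
  have h_upper : m / L ^ 2 * μ ≤ 1 := by
    rw [div_mul_eq_mul_div, div_le_one (by positivity), sq]
    exact mul_le_mul (hmμ.trans hμL) hμL (hm.le.trans hmμ) hL.le
  nlinarith [div_nonneg (sq_nonneg m) (sq_nonneg L)]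

namespace Matrix.IsHermitian

variable {n : Type*} [Fintype n] [DecidableEq n] {A : Matrix n n ℝ}

lemma inner_eigenvectorBasis_toEuclideanLin (hA : A.IsHermitian) (x : EuclideanSpace ℝ n)
    (i : n) :
    ⟪hA.eigenvectorBasis i, toEuclideanLin A x⟫ = hA.eigenvalues i * ⟪hA.eigenvectorBasis i, x⟫ := by
  have h_eigen : toEuclideanLin A (hA.eigenvectorBasis i) =
      hA.eigenvalues i • hA.eigenvectorBasis i := by
    ext j
    simpa [toLpLin_apply] using congrFun (hA.mulVec_eigenvectorBasis i) j
  rw [← (isSymmetric_toEuclideanLin_iff.mpr hA), h_eigen, real_inner_smul_left]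

lemma inner_toEuclideanLin_self_eq_sum (hA : A.IsHermitian) (x : EuclideanSpace ℝ n) :
    ⟪x, toEuclideanLin A x⟫ = ∑ i, hA.eigenvalues i * ⟪hA.eigenvectorBasis i, x⟫ ^ 2 := by
  rw [← hA.eigenvectorBasis.sum_inner_mul_inner]
  refine Finset.sum_congr rfl fun i _ => ?_
  rw [inner_eigenvectorBasis_toEuclideanLin, real_inner_comm x, sq]
  ring

lemma inner_toEuclideanLin_self_le (hA : A.IsHermitian) {b : ℝ} (hb : ∀ i, hA.eigenvalues i ≤ b)
    (x : EuclideanSpace ℝ n) : ⟪x, toEuclideanLin A x⟫ ≤ b * ‖x‖ ^ 2 := by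
  rw [hA.inner_toEuclideanLin_self_eq_sum, ← hA.eigenvectorBasis.sum_sq_inner_right,
    Finset.mul_sum]
  exact Finset.sum_le_sum fun i _ => mul_le_mul_of_nonneg_right (hb i) (sq_nonneg _)

lemma le_inner_toEuclideanLin_self (hA : A.IsHermitian) {a : ℝ} (ha : ∀ i, a ≤ hA.eigenvalues i)
    (x : EuclideanSpace ℝ n) : a * ‖x‖ ^ 2 ≤ ⟪x, toEuclideanLin A x⟫ := by
  rw [hA.inner_toEuclideanLin_self_eq_sum, ← hA.eigenvectorBasis.sum_sq_inner_right,
    Finset.mul_sum]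
  exact Finset.sum_le_sum fun i _ => mul_le_mul_of_nonneg_right (ha i) (sq_nonneg _)

lemma eigenvalues_eq_inner (hA : A.IsHermitian) (i : n) :
    hA.eigenvalues i =
      ⟪hA.eigenvectorBasis i, toEuclideanLin A (hA.eigenvectorBasis i)⟫ := by
  rw [inner_eigenvectorBasis_toEuclideanLin, real_inner_self_eq_norm_sq,
    hA.eigenvectorBasis.orthonormal.1 i, one_pow, mul_one]

lemma eigenvalues_add_mem_Icc {B : Matrix n n ℝ} (hA : A.IsHermitian) (hB : B.IsHermitian)
    {a a' b b' : ℝ} (hAi : ∀ i, hA.eigenvalues i ∈ Icc a a')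
    (hBi : ∀ i, hB.eigenvalues i ∈ Icc b b') (i : n) :
    (hA.add hB).eigenvalues i ∈ Icc (a + b) (a' + b') := by
  set v := (hA.add hB).eigenvectorBasis i
  have hv : ‖v‖ ^ 2 = 1 := by rw [(hA.add hB).eigenvectorBasis.orthonormal.1 i, one_pow]
  have hA_lower := hA.le_inner_toEuclideanLin_self (fun j => (hAi j).1) v
  have hA_upper := hA.inner_toEuclideanLin_self_le (fun j => (hAi j).2) v
  have hB_lower := hB.le_inner_toEuclideanLin_self (fun j => (hBi j).1) v
  have hB_upper := hB.inner_toEuclideanLin_self_le (fun j => (hBi j).2) v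
  rw [hv, mul_one] at hA_lower hA_upper hB_lower hB_upper
  rw [eigenvalues_eq_inner, map_add, LinearMap.add_apply, inner_add_right]
  exact ⟨add_le_add hA_lower hB_lower, add_le_add hA_upper hB_upper⟩

lemma norm_sub_smul_toEuclideanLin_le (hA : A.IsHermitian) {η c : ℝ}
    (hc : ∀ i, (1 - η * hA.eigenvalues i) ^ 2 ≤ c) (x : EuclideanSpace ℝ n) :
    ‖x - η • toEuclideanLin A x‖ ≤ √c * ‖x‖ := by
  set b := hA.eigenvectorBasis
  have h_sq : ‖x - η • toEuclideanLin A x‖ ^ 2 ≤ c * ‖x‖ ^ 2 := by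
    rw [← b.sum_sq_inner_right, ← b.sum_sq_inner_right x, Finset.mul_sum]
    refine Finset.sum_le_sum fun i _ => ?_
    have h_coord : ⟪b i, x - η • toEuclideanLin A x⟫ = (1 - η * hA.eigenvalues i) * ⟪b i, x⟫ := by
      rw [inner_sub_right, real_inner_smul_right, inner_eigenvectorBasis_toEuclideanLin]
      ring
    rw [h_coord, mul_pow]
    exact mul_le_mul_of_nonneg_right (hc i) (sq_nonneg _)
  calc ‖x - η • toEuclideanLin A x‖ = √(‖x - η • toEuclideanLin A x‖ ^ 2) :=
        (Real.sqrt_sq (norm_nonneg _)).symm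
    _ ≤ √(c * ‖x‖ ^ 2) := Real.sqrt_le_sqrt h_sq
    _ = √c * ‖x‖ := by rw [Real.sqrt_mul' c (sq_nonneg _), Real.sqrt_sq (norm_nonneg _)]

lemma norm_sub_smul_toEuclideanLin_le_of_eigenvalues_mem_Icc (hA : A.IsHermitian) {m L L' : ℝ}
    (hm : 0 < m) (hAi : ∀ i, hA.eigenvalues i ∈ Icc m L) (hLL' : L ≤ L')
    (x : EuclideanSpace ℝ n) :
    ‖x - (m / L ^ 2) • toEuclideanLin A x‖ ≤ √(1 - m ^ 2 / L' ^ 2) * ‖x‖ := by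
  refine hA.norm_sub_smul_toEuclideanLin_le (fun i => ?_) x
  obtain ⟨hmi, hiL⟩ := hAi i
  have hL : 0 < L := hm.trans_le (hmi.trans hiL)
  calc (1 - m / L ^ 2 * hA.eigenvalues i) ^ 2 ≤ 1 - m ^ 2 / L ^ 2 :=
        sq_one_sub_div_sq_mul_le hm hmi hiL
    _ ≤ 1 - m ^ 2 / L' ^ 2 := by gcongr

end Matrix.IsHermitian

section TwoByTwo

variable {A : Matrix (Fin 2) (Fin 2) ℝ}

lemma lamMin_le_eigenvalues (hA : A.IsHermitian) (i : Fin 2) : lamMin A ≤ hA.eigenvalues i :=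
  csInf_le finite_real_spectrum.bddBelow (hA.eigenvalues_mem_spectrum_real i)

lemma eigenvalues_le_lamMax (hA : A.IsHermitian) (i : Fin 2) : hA.eigenvalues i ≤ lamMax A :=
  le_csSup finite_real_spectrum.bddAbove (hA.eigenvalues_mem_spectrum_real i)

lemma lamMin_pos (hA : A.PosDef) : 0 < lamMin A := by
  obtain ⟨i, hi⟩ : lamMin A ∈ range hA.1.eigenvalues := by
    rw [← hA.1.spectrum_real_eq_range_eigenvalues]
    exact Set.Nonempty.csInf_mem ⟨_, hA.1.eigenvalues_mem_spectrum_real 0⟩ finite_real_spectrum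
  exact hi ▸ hA.eigenvalues_pos i

end TwoByTwo

theorem concurrent_learning_exp_convergence_general
    (vmax Δt : ℝ)
    (e : ℕ → EuclideanSpace ℝ (Fin 2)) (u : ℕ → EuclideanSpace ℝ (Fin 2))
    (U : ℕ → Matrix (Fin 2) (Fin 2) ℝ)
    (hU : ∀ k, U k = Matrix.vecMulVec (u k) (u k))
    (hUb : ∀ k, lamMax (U k) ≤ 2 * vmax * Δt)
    (S : Matrix (Fin 2) (Fin 2) ℝ) (hSpd : S.PosDef)
    (η : ℕ → ℝ)
    (hη : ∀ k, η k = lamMin S / (lamMax (U k) + lamMax S) ^ 2)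
    (hupd : ∀ k, e (k + 1) = e k - η k • (Matrix.toEuclideanLin (U k + S)) (e k)) :
    Real.sqrt (1 - (lamMin S) ^ 2 / (2 * vmax * Δt + lamMax S) ^ 2) < 1 ∧
    ∀ k, ‖e k‖ ≤
      (Real.sqrt (1 - (lamMin S) ^ 2 / (2 * vmax * Δt + lamMax S) ^ 2)) ^ k * ‖e 0‖ := by
  have hS := hSpd.1
  have hU_psd : ∀ k, (U k).PosSemidef := fun k => hU k ▸ posSemidef_vecMulVec_self_star (u k)
  have hm := lamMin_pos hSpd
  have h_eig : ∀ k i, ((hU_psd k).1.add hS).eigenvalues i ∈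
      Icc (lamMin S) (lamMax (U k) + lamMax S) := fun k i => by
    simpa using (hU_psd k).1.eigenvalues_add_mem_Icc hS
      (fun j => ⟨(hU_psd k).eigenvalues_nonneg j, eigenvalues_le_lamMax _ j⟩)
      (fun j => ⟨lamMin_le_eigenvalues hS j, eigenvalues_le_lamMax hS j⟩) i
  have h_step : ∀ k, ‖e (k + 1)‖ ≤
      √(1 - lamMin S ^ 2 / (2 * vmax * Δt + lamMax S) ^ 2) * ‖e k‖ := fun k => by
    rw [hupd, hη]
    exact ((hU_psd k).1.add hS).norm_sub_smul_toEuclideanLin_le_of_eigenvalues_mem_Icc hm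
      (h_eig k) (by linarith [hUb k]) (e k)
  have hL : 0 < 2 * vmax * Δt + lamMax S :=
    hm.trans_le (((h_eig 0 0).1.trans (h_eig 0 0).2).trans (by linarith [hUb 0]))
  refine ⟨(Real.sqrt_lt' one_pos).2 ?_, fun k =>
    le_geom (u := fun k => ‖e k‖) (Real.sqrt_nonneg _) k fun j _ => h_step j⟩
  have := div_pos (pow_pos hm 2) (pow_pos hL 2)
  linarith

/-- Exponential convergence of the concurrent-learning estimator: if
`λ_max(U_k) ≤ 2 v_max Δt` for all `k` and `S` is positive definite, then
`‖e_k‖ ≤ λ^k ‖e₀‖` with `λ = √(1 − λ_min(S)²/(2 v_max Δt + λ_max(S))²) < 1`. -/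
theorem concurrent_learning_exp_convergence
    (vmax Δt : ℝ) (hv : 0 < vmax) (hΔ : 0 < Δt)
    (e : ℕ → EuclideanSpace ℝ (Fin 2)) (u : ℕ → EuclideanSpace ℝ (Fin 2))
    (U : ℕ → Matrix (Fin 2) (Fin 2) ℝ)
    (hU : ∀ k, U k = Matrix.vecMulVec (u k) (u k))
    (hUb : ∀ k, lamMax (U k) ≤ 2 * vmax * Δt)
    (S : Matrix (Fin 2) (Fin 2) ℝ) (hSpd : S.PosDef)
    (η : ℕ → ℝ)
    (hη : ∀ k, η k = lamMin S / (lamMax (U k) + lamMax S) ^ 2)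
    (hupd : ∀ k, e (k + 1) = e k - η k • (Matrix.toEuclideanLin (U k + S)) (e k)) :
    Real.sqrt (1 - (lamMin S) ^ 2 / (2 * vmax * Δt + lamMax S) ^ 2) < 1 ∧
    ∀ k, ‖e k‖ ≤
      (Real.sqrt (1 - (lamMin S) ^ 2 / (2 * vmax * Δt + lamMax S) ^ 2)) ^ k * ‖e 0‖ :=
  concurrent_learning_exp_convergence_general vmax Δt e u U hU hUb S hSpd η hη hupd
end

section
/- Let V : ℝ≥0 → ℝ≥0 be a continuously differentiable function satisfying V'(t) ≤ −K V(t)^α + β for constants K > 0, 0 < α < 1, β ≥ 0, and let 0 < γ < 1. Then for all t ≥ t* := V(0)^{1−α}/(K γ (1−α)), it holds that V(t)^α ≤ β/((1−γ)K). -/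
/-!
Above the level `C := (β / ((1 - γ) K)) ^ (1 / α)` the inequality gives `V' ≤ -γ K V ^ α < 0`.
While `V > C`, the function `V ^ (1 - α)` therefore decreases at rate at least `γ K (1 - α)`,
so `V` must drop to `C` before time `t*`; and since `V` decreases whenever it exceeds `C`,
it stays below `C` afterwards.
-/

open Set Real

theorem le_of_hasDerivAt_neg_of_lt {V V' : ℝ → ℝ} {C s t : ℝ} (hst : s ≤ t)
    (hd : ∀ x ∈ Icc s t, HasDerivAt V (V' x) x)
    (hneg : ∀ x ∈ Icc s t, C < V x → V' x < 0) (hs : V s ≤ C) : V t ≤ C := by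
  -- the barrier `C + ε` is crossed only where `V > C`, where `V' < 0 = (C + ε)'`
  refine le_of_forall_pos_le_add fun ε hε => ?_
  have hcont : ContinuousOn V (Icc s t) := fun x hx => (hd x hx).continuousAt.continuousWithinAt
  exact image_le_of_deriv_right_lt_deriv_boundary (B := fun _ => C + ε) (B' := fun _ => 0)
    hcont (fun x hx => (hd x (Ico_subset_Icc_self hx)).hasDerivWithinAt) (by linarith)
    (fun x => hasDerivAt_const x (C + ε))
    (fun x hx hVx => hneg x (Ico_subset_Icc_self hx) (by linarith)) (right_mem_Icc.2 hst)

theorem mul_one_sub_mul_rpow_sub_one_le {v v' k α : ℝ} (hα : α ≤ 1) (hv : 0 < v)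
    (h : v' ≤ -k * v ^ α) : v' * (1 - α) * v ^ (1 - α - 1) ≤ -(k * (1 - α)) := by
  have hvα : v ^ α * v ^ (1 - α - 1) = 1 := by
    rw [← rpow_add hv, show α + (1 - α - 1) = 0 by ring, rpow_zero]
  have hfac : 0 ≤ (1 - α) * v ^ (1 - α - 1) :=
    mul_nonneg (by linarith) (rpow_pos_of_pos hv _).le
  calc v' * (1 - α) * v ^ (1 - α - 1) = v' * ((1 - α) * v ^ (1 - α - 1)) := by ring
    _ ≤ -k * v ^ α * ((1 - α) * v ^ (1 - α - 1)) := mul_le_mul_of_nonneg_right h hfac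
    _ = -(k * (1 - α)) * (v ^ α * v ^ (1 - α - 1)) := by ring
    _ = -(k * (1 - α)) := by rw [hvα, mul_one]

theorem exists_le_of_hasDerivAt_le_neg_mul_rpow {V V' : ℝ → ℝ} {k α C a b : ℝ}
    (hα : α < 1) (hC : 0 ≤ C) (hab : a ≤ b) (hb : V a ^ (1 - α) ≤ k * (1 - α) * (b - a))
    (hd : ∀ x ∈ Icc a b, HasDerivAt V (V' x) x)
    (hdecay : ∀ x ∈ Icc a b, C < V x → V' x ≤ -k * V x ^ α) :
    ∃ s ∈ Icc a b, V s ≤ C := by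
  by_contra! hbig
  have hpos : ∀ x ∈ Icc a b, 0 < V x := fun x hx => hC.trans_lt (hbig x hx)
  have hWd : ∀ x ∈ Icc a b,
      HasDerivAt (fun y => V y ^ (1 - α)) (V' x * (1 - α) * V x ^ (1 - α - 1)) x :=
    fun x hx => (hd x hx).rpow_const (Or.inl (hpos x hx).ne')
  have hWb : V b ^ (1 - α) ≤ V a ^ (1 - α) - k * (1 - α) * (b - a) :=
    image_le_of_deriv_right_le_deriv_boundary (f := fun y => V y ^ (1 - α))
      (B := fun x => V a ^ (1 - α) - k * (1 - α) * (x - a)) (B' := fun _ => -(k * (1 - α)))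
      (fun x hx => (hWd x hx).continuousAt.continuousWithinAt)
      (fun x hx => (hWd x (Ico_subset_Icc_self hx)).hasDerivWithinAt) (by simp)
      (by fun_prop)
      (fun x _ => by
        simpa using ((hasDerivAt_id x).sub_const a).const_mul (k * (1 - α))
          |>.const_sub (V a ^ (1 - α)) |>.hasDerivWithinAt)
      (fun x hx => mul_one_sub_mul_rpow_sub_one_le hα.le (hpos x (Ico_subset_Icc_self hx))
        (hdecay x (Ico_subset_Icc_self hx) (hbig x (Ico_subset_Icc_self hx))))
      (right_mem_Icc.2 hab)
  have hWb_pos := rpow_pos_of_pos (hpos b (right_mem_Icc.2 hab)) (1 - α)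
  linarith

/-- Finite-time convergence lemma: if `V ≥ 0` is differentiable with
`V'(t) ≤ −K V(t)^α + β` for `K > 0`, `0 < α < 1`, `β ≥ 0`, and `0 < γ < 1`, then
for all `t ≥ t* := V(0)^{1−α}/(K γ (1−α))` one has `V(t)^α ≤ β/((1−γ)K)`. -/
theorem finite_time_convergence (V V' : ℝ → ℝ) (K α β γ : ℝ)
    (hK : 0 < K) (hα : 0 < α) (hα1 : α < 1) (hβ : 0 ≤ β) (hγ : 0 < γ) (hγ1 : γ < 1)
    (hVnn : ∀ t, 0 ≤ t → 0 ≤ V t)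
    (hderiv : ∀ t, 0 ≤ t → HasDerivAt V (V' t) t)
    (hineq : ∀ t, 0 ≤ t → V' t ≤ -K * (V t) ^ α + β) :
    ∀ t, (V 0) ^ (1 - α) / (K * γ * (1 - α)) ≤ t →
      (V t) ^ α ≤ β / ((1 - γ) * K) := by
  intro t ht
  have h1γ : 0 < 1 - γ := by linarith
  have h1α : 0 < 1 - α := by linarith
  set B := β / ((1 - γ) * K)
  set C := B ^ α⁻¹
  have hC : 0 ≤ C := by positivity
  have hCα : C ^ α = B := rpow_inv_rpow (by positivity) hα.ne'
  have hdecay : ∀ x, 0 ≤ x → C < V x → V' x < -(γ * K) * V x ^ α := by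
    intro x hx hCV
    have hVα : B < V x ^ α := hCα ▸ rpow_lt_rpow hC hCV hα
    have hβV : β < (1 - γ) * K * V x ^ α := by rwa [div_lt_iff₀' (by positivity)] at hVα
    linarith [hineq x hx]
  have hts : 0 ≤ V 0 ^ (1 - α) / (K * γ * (1 - α)) := by
    have := hVnn 0 le_rfl
    positivity
  obtain ⟨s, hs, hsC⟩ := exists_le_of_hasDerivAt_le_neg_mul_rpow (k := γ * K) hα1 hC hts
    (by rw [sub_zero, mul_comm γ K, mul_div_cancel₀ _ (by positivity)]) (fun x hx => hderiv x hx.1) (fun x hx hCV => (hdecay x hx.1 hCV).le)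
  have hVt : V t ≤ C := le_of_hasDerivAt_neg_of_lt (hs.2.trans ht)
    (fun x hx => hderiv x (hs.1.trans hx.1))
    (fun x hx hCV => (hdecay x (hs.1.trans hx.1) hCV).trans_le <| by
      rw [neg_mul]
      exact neg_nonpos.2 (mul_nonneg (by positivity) (rpow_nonneg (hC.trans hCV.le) α)))
    hsC
  calc V t ^ α ≤ C ^ α := rpow_le_rpow (hVnn t (hts.trans ht)) hVt hα.le
    _ = B := hCα
end
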